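/- arXiv:1608.03522 — 2 statements merged into one kernel-verified Lean document; each statement's English description precedes it below -/
import Mathlib

section
/- S(1) = 5, and for every integer n ≥ 2, S(n) = (2/(3n−1))·C(3n−1, n−1), where C denotes the binomial coefficient. -/
/-- One step in the random Fibonacci tree; `true` means a right branch:
from the pair `(x, y)`, a right branch leads to `(y, x + y)` and a left
branch leads to `(y, |x - y|)`. -/
def fibStep (p : ℤ × ℤ) (b : Bool) : ℤ × ℤ :=
  if b then (p.2, p.1 + p.2) else (p.2, |p.1 - p.2|)

/-- `fibPairs w i = (g_i, g_{i+1})` for the walk determined by the branch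
sequence `w`, where `w j` is the `(j+1)`-st branch choice. -/
def fibPairs (w : ℕ → Bool) : ℕ → ℤ × ℤ
  | 0 => (1, 1)
  | i + 1 => fibStep (fibPairs w i) (w i)

/-- Extend a branch sequence of length `m` by dummy values. -/
def extendW {m : ℕ} (w : Fin m → Bool) : ℕ → Bool :=
  fun i => if h : i < m then w ⟨i, h⟩ else false

/-- The ending pair `(g_m, g_{m+1})` of the walk determined by a branch
sequence of length `m`. -/
def endPair {m : ℕ} (w : Fin m → Bool) : ℤ × ℤ := fibPairs (extendW w) m

/-- `A(n)`: the number of branch sequences of length `3n` whose walk has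
ending pair `(1,1)`. -/
noncomputable def A11 (n : ℕ) : ℕ :=
  Nat.card {w : Fin (3 * n) → Bool // endPair w = (1, 1)}

/-- `S(n)`: the number of branch sequences of length `3n` whose walk has ending
pair `(1,1)` and no index `1 ≤ i ≤ 3n - 1` with `(g_i, g_{i+1}) = (1,1)`. -/
noncomputable def Sprim (n : ℕ) : ℕ :=
  Nat.card {w : Fin (3 * n) → Bool //
    endPair w = (1, 1) ∧
    ∀ i, 1 ≤ i → i ≤ 3 * n - 1 → fibPairs (extendW w) i ≠ (1, 1)}

/-- `B(n)`: the number of branch sequences of length `3n` whose walk has ending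
pair `(1,1)` and satisfies `g_i ≠ 0` for all `0 ≤ i ≤ 3n + 1`. -/
noncomputable def Bnz (n : ℕ) : ℕ :=
  Nat.card {w : Fin (3 * n) → Bool //
    endPair w = (1, 1) ∧
    ∀ i, i ≤ 3 * n + 1 → (fibPairs (extendW w) i).1 ≠ 0}

/-- `m(a,b)`: `0` if `a, b` both odd, `1` if `a` odd and `b` even,
`2` if `a` even (and `b` odd). -/
def pairOffset (a b : ℕ) : ℕ :=
  if Odd a then (if Odd b then 0 else 1) else 2

/-- `A_{(a,b)}(n)`: the number of branch sequences of length `3n + m(a,b)`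
whose walk has ending pair `(a, b)`. -/
noncomputable def Aab (a b : ℕ) (n : ℕ) : ℕ :=
  Nat.card {w : Fin (3 * n + pairOffset a b) → Bool //
    endPair w = ((a : ℤ), (b : ℤ))}

/-- `SW_{(1,1)}(a,b)`: the least `m` such that some branch sequence of
length `m` has walk with ending pair `(a, b)`. -/
noncomputable def SW (a b : ℕ) : ℕ :=
  sInf {m : ℕ | ∃ w : Fin m → Bool, endPair w = ((a : ℤ), (b : ℤ))}


open Finset

def bval (b : Bool) : ℤ := if b then 2 else -1
def cval (b : Bool) : ℤ := if b then -2 else 1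

lemma cval_eq_neg_bval (b : Bool) : cval b = - bval b := by cases b <;> simp [cval, bval]
lemma cval_le_one (b : Bool) : cval b ≤ 1 := by cases b <;> simp [cval]

def sval (w : ℕ → Bool) (i : ℕ) : ℤ := ∑ j ∈ Finset.range i, bval (w j)
def csum (w : ℕ → Bool) (i : ℕ) : ℤ := ∑ j ∈ Finset.range i, cval (w j)

lemma sval_succ (w : ℕ → Bool) (i : ℕ) : sval w (i+1) = sval w i + bval (w i) :=
  Finset.sum_range_succ _ _
lemma csum_succ (w : ℕ → Bool) (i : ℕ) : csum w (i+1) = csum w i + cval (w i) :=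
  Finset.sum_range_succ _ _

def phi : ℕ → ℕ → ℕ
  | a, b =>
    if h : 0 < b ∧ b < a then phi b (a - b) + 1
    else if h2 : 0 < a ∧ a < b then phi (b - a) a + 2
    else 0
termination_by a b => a + b
decreasing_by all_goals omega

lemma phi_gt {a b : ℕ} (hb : 0 < b) (h : b < a) : phi a b = phi b (a - b) + 1 := by
  rw [phi]; simp [hb, h]

lemma phi_lt {a b : ℕ} (ha : 0 < a) (h : a < b) : phi a b = phi (b - a) a + 2 := by
  rw [phi]; rw [dif_neg (by omega), dif_pos ⟨ha, h⟩]

lemma phi_diag {a b : ℕ} (h : a = b) : phi a b = 0 := by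
  rw [phi]; rw [dif_neg (by omega), dif_neg (by omega)]

lemma phi_R {a b : ℕ} (ha : 0 < a) (hb : 0 < b) : phi b (a + b) = phi a b + 2 := by
  rw [phi_lt hb (by omega)]
  congr 2
  omega

lemma phi_L_lt {a b : ℕ} (ha : 0 < a) (h : a < b) : phi b (b - a) + 1 = phi a b := by
  have e : b - (b - a) = a := by omega
  rw [phi_gt (by omega) (by omega), phi_lt ha h, e]

lemma phi_eq_zero {a b : ℕ} (ha : 0 < a) (hb : 0 < b) (h : phi a b = 0) : a = b := by
  by_contra hne
  rcases lt_or_gt_of_ne hne with h1 | h1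
  · rw [phi_lt ha h1] at h; omega
  · rw [phi_gt hb h1] at h; omega

/-- Invariant: the pair after `i` steps is a positive coprime pair whose
`phi`-value equals the prefix sum `sval w i`. -/
def WInv (w : ℕ → Bool) (i : ℕ) : Prop :=
  ∃ a b : ℕ, 0 < a ∧ 0 < b ∧ Nat.gcd a b = 1 ∧
    fibPairs w i = ((a : ℤ), (b : ℤ)) ∧ (phi a b : ℤ) = sval w i

lemma winv_zero (w : ℕ → Bool) : WInv w 0 :=
  ⟨1, 1, one_pos, one_pos, rfl, rfl, by simp [phi_diag, sval]⟩

lemma WInv.step {w : ℕ → Bool} {i : ℕ} (h : WInv w i)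
    (hc : w i = true ∨ fibPairs w i ≠ (1, 1)) : WInv w (i + 1) := by
  obtain ⟨a, b, ha, hb, hg, hp, hphi⟩ := h
  have hpair : fibPairs w (i+1) = fibStep ((a : ℤ), (b : ℤ)) (w i) := by
    rw [show fibPairs w (i+1) = fibStep (fibPairs w i) (w i) from rfl, hp]
  cases hw : w i with
  | true =>
      refine ⟨b, a + b, hb, by omega, ?_, ?_, ?_⟩
      · rw [Nat.gcd_add_self_right, Nat.gcd_comm]; exact hg
      · rw [hpair, hw]; simp [fibStep]
      · rw [sval_succ, hw, ← hphi, phi_R ha hb]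
        simp only [bval, if_true]
        push_cast
        ring
  | false =>
      have hne : a ≠ b := by
        rintro rfl
        have : a = 1 := by simpa using hg
        subst this
        rcases hc with hc | hc
        · rw [hw] at hc; exact Bool.false_ne_true hc
        · exact hc (by rw [hp]; norm_num)
      rcases lt_or_gt_of_ne hne with hlt | hgt
      · -- a < b, new pair (b, b - a)
        refine ⟨b, b - a, hb, by omega, ?_, ?_, ?_⟩
        · have e : a + (b - a) = b := by omega
          have h2 : Nat.gcd (b - a) b = Nat.gcd (b - a) a := by
            simpa [e] using Nat.gcd_add_self_right (b - a) a
          rw [Nat.gcd_comm, h2, Nat.gcd_sub_self_left hlt.le, Nat.gcd_comm]; exact hg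
        · rw [hpair, hw]; simp only [fibStep, if_neg Bool.false_ne_true]
          have : |(a : ℤ) - b| = ((b - a : ℕ) : ℤ) := by
            rw [abs_sub_comm]
            rw [abs_of_nonneg (by push_cast; omega)]
            push_cast [Nat.cast_sub hlt.le]; ring
          rw [this]
        · rw [sval_succ, hw, ← hphi]
          have h2 : ((phi b (b - a) + 1 : ℕ) : ℤ) = ((phi a b : ℕ) : ℤ) := by
            rw [phi_L_lt ha hlt]
          push_cast at h2
          simp only [bval, Bool.false_eq_true, if_false]
          omega
      · -- b < a, new pair (b, a - b)
        refine ⟨b, a - b, hb, by omega, ?_, ?_, ?_⟩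
        · rw [Nat.gcd_sub_self_right hgt.le, Nat.gcd_comm]; exact hg
        · rw [hpair, hw]; simp only [fibStep, if_neg Bool.false_ne_true]
          have : |(a : ℤ) - b| = ((a - b : ℕ) : ℤ) := by
            rw [abs_of_nonneg (by push_cast; omega)]
            push_cast [Nat.cast_sub hgt.le]; ring
          rw [this]
        · rw [sval_succ, hw, ← hphi]
          have := phi_gt hb hgt
          push_cast [this, bval]; ring

lemma zero_start {w : ℕ → Bool} (h : w 0 = false) : fibPairs w 3 = (1, 1) := by
  have h1 : fibPairs w 1 = (1, 0) := by
    show fibStep (fibPairs w 0) (w 0) = _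
    rw [h]; simp [fibPairs, fibStep]
  have h2 : fibPairs w 2 = (0, 1) := by
    show fibStep (fibPairs w 1) (w 1) = _
    rw [h1]; cases hw : w 1 <;> simp [fibStep]
  show fibStep (fibPairs w 2) (w 2) = _
  rw [h2]; cases hw : w 2 <;> simp [fibStep]

/-- The main characterization: for `n ≥ 2`, a branch sequence is a primitive
loop iff its `±` prefix sums stay positive and end at zero. -/
lemma prim_iff_path {n : ℕ} (hn : 2 ≤ n) (w : Fin (3 * n) → Bool) :
    (endPair w = (1, 1) ∧
      ∀ i, 1 ≤ i → i ≤ 3 * n - 1 → fibPairs (extendW w) i ≠ (1, 1)) ↔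
    ((∀ i, 1 ≤ i → i ≤ 3 * n - 1 → 1 ≤ sval (extendW w) i) ∧
      sval (extendW w) (3 * n) = 0) := by
  have hend : endPair w = fibPairs (extendW w) (3 * n) := rfl
  constructor
  · rintro ⟨he, hprim⟩
    -- first step must be a right branch
    have hw0 : extendW w 0 = true := by
      by_contra h0
      have h0' : extendW w 0 = false := by simpa using h0
      exact hprim 3 (by omega) (by omega) (zero_start h0')
    have key : ∀ i, i ≤ 3 * n → WInv (extendW w) i := by
      intro i hi
      induction i with
      | zero => exact winv_zero _
      | succ k ih =>
          refine (ih (by omega)).step ?_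
          rcases Nat.eq_zero_or_pos k with rfl | hk
          · exact Or.inl hw0
          · exact Or.inr (hprim k (by omega) (by omega))
    constructor
    · intro i h1 h2
      obtain ⟨a, b, ha, hb, hg, hp, hphi⟩ := key i (by omega)
      have hne : (a, b) ≠ (1, 1) := by
        rintro h
        apply hprim i h1 h2
        rw [hp]
        have : a = 1 ∧ b = 1 := by exact ⟨congrArg Prod.fst h, congrArg Prod.snd h⟩
        rw [this.1, this.2]; norm_num
      have hab : a ≠ b := by
        rintro rfl
        have : a = 1 := by simpa using hg
        exact hne (by rw [this])
      have : 0 < phi a b := by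
        by_contra hz
        exact hab (phi_eq_zero ha hb (by omega))
      omega
    · obtain ⟨a, b, ha, hb, hg, hp, hphi⟩ := key (3 * n) le_rfl
      rw [hend, hp] at he
      obtain ⟨e1, e2⟩ := Prod.mk.inj he
      have ha1 : a = 1 := by exact_mod_cast e1
      have hb1 : b = 1 := by exact_mod_cast e2
      rw [← hphi, ha1, hb1, phi_diag rfl]; exact Nat.cast_zero
  · rintro ⟨hpos, hzero⟩
    have hw0 : extendW w 0 = true := by
      by_contra h0
      have h0' : extendW w 0 = false := by simpa using h0
      have := hpos 1 le_rfl (by omega)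
      rw [show (1 : ℕ) = 0 + 1 from rfl, sval_succ, h0'] at this
      simp [sval, bval] at this
    have key : ∀ i, i ≤ 3 * n → WInv (extendW w) i := by
      intro i hi
      induction i with
      | zero => exact winv_zero _
      | succ k ih =>
          have ihk := ih (by omega)
          refine ihk.step ?_
          rcases Nat.eq_zero_or_pos k with rfl | hk
          · exact Or.inl hw0
          · refine Or.inr ?_
            obtain ⟨a, b, ha, hb, hg, hp, hphi⟩ := ihk
            rw [hp]
            intro hcontra
            obtain ⟨e1, e2⟩ := Prod.mk.inj hcontra
            have ha1 : a = 1 := by exact_mod_cast e1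
            have hb1 : b = 1 := by exact_mod_cast e2
            have h0 : sval (extendW w) k = 0 := by
              rw [← hphi, ha1, hb1, phi_diag rfl]; exact Nat.cast_zero
            have := hpos k (by omega) (by omega)
            omega
    constructor
    · rw [hend]
      obtain ⟨a, b, ha, hb, hg, hp, hphi⟩ := key (3 * n) le_rfl
      rw [hzero] at hphi
      have hab : a = b := phi_eq_zero ha hb (by exact_mod_cast hphi)
      subst hab
      have : a = 1 := by simpa using hg
      subst this
      rw [hp]; norm_num
    · intro i h1 h2
      obtain ⟨a, b, ha, hb, hg, hp, hphi⟩ := key i (by omega)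
      rw [hp]
      intro hcontra
      obtain ⟨e1, e2⟩ := Prod.mk.inj hcontra
      have ha1 : a = 1 := by exact_mod_cast e1
      have hb1 : b = 1 := by exact_mod_cast e2
      have h0 : sval (extendW w) i = 0 := by
        rw [← hphi, ha1, hb1, phi_diag rfl]; exact Nat.cast_zero
      have := hpos i h1 h2
      omega

/-- Cycle lemma, specialized to winding number 2: if `F` increases by at most 1
each step and gains exactly 2 over each window of length `m`, then exactly 2
starting points `j < m` are "dominating" (`F j < F (j+r)` for `r = 1..m`).
The dominating-start predicate: -/
def domPred (F : ℕ → ℤ) (m : ℕ) (j : ℕ) : Prop := ∀ r ∈ Finset.Icc 1 m, F j < F (j + r)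

instance (F : ℕ → ℤ) (m : ℕ) : DecidablePred (domPred F m) := fun _ => by
  unfold domPred; infer_instance

lemma cycle_core (m : ℕ) (hm : 0 < m) (F : ℕ → ℤ)
    (hstep : ∀ t, F (t + 1) ≤ F t + 1)
    (hper : ∀ t, F (t + m) = F t + 2) :
    ((Finset.range m).filter (domPred F m)).card = 2 := by
  set T : Finset ℕ := Finset.range (2 * m + 1) with hT
  have hTne : (T.image F).Nonempty := by
    refine Finset.Nonempty.image ?_ _
    exact ⟨0, by simp [hT]⟩
  set μ : ℤ := (T.image F).min' hTne with hμdef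
  have hμ_le : ∀ t, t ≤ 2 * m → μ ≤ F t := by
    intro t ht
    exact Finset.min'_le _ _ (Finset.mem_image_of_mem F (by simp [hT]; omega))
  obtain ⟨t0, ht0T, ht0v⟩ : ∃ t ∈ T, F t = μ := by
    have := (T.image F).min'_mem hTne
    rw [← hμdef] at this
    simpa [eq_comm] using Finset.mem_image.mp this
  -- j0 : last position in [0, 2m] where F = μ
  set O0 : Finset ℕ := T.filter (fun t => F t = μ) with hO0
  have hO0ne : O0.Nonempty := ⟨t0, by simp [hO0, ht0T, ht0v]⟩
  set j0 : ℕ := O0.max' hO0ne with hj0def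
  have hj0mem := O0.max'_mem hO0ne
  have hj0v : F j0 = μ := (Finset.mem_filter.mp hj0mem).2
  have hj0T : j0 ≤ 2 * m := by
    have h := (Finset.mem_filter.mp hj0mem).1
    rw [← hj0def] at h
    simp [hT] at h; omega
  have hj0last : ∀ t, t ≤ 2 * m → j0 < t → F t ≠ μ := by
    intro t ht hlt hv
    have : t ∈ O0 := by simp [hO0, hT]; exact ⟨by omega, hv⟩
    have := Finset.le_max' _ _ this
    omega
  have hj0m : j0 < m := by
    by_contra hge
    push_neg at hge
    have h1 := hper (j0 - m)
    rw [show j0 - m + m = j0 by omega] at h1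
    have h2 := hμ_le (j0 - m) (by omega)
    have h3 : F j0 = μ := hj0v
    linarith
  have hnext : F (j0 + 1) = μ + 1 := by
    have h1 := hstep j0
    have h2 := hμ_le (j0 + 1) (by omega)
    have h3 := hj0last (j0 + 1) (by omega) (by omega)
    omega
  -- j1 : last position in [0, 2m] where F = μ + 1
  set O1 : Finset ℕ := T.filter (fun t => F t = μ + 1) with hO1
  have hO1ne : O1.Nonempty := ⟨j0 + 1, by
    simp only [hO1, Finset.mem_filter, hT, Finset.mem_range]
    exact ⟨by omega, hnext⟩⟩
  set j1 : ℕ := O1.max' hO1ne with hj1def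
  have hj1mem := O1.max'_mem hO1ne
  have hj1v : F j1 = μ + 1 := (Finset.mem_filter.mp hj1mem).2
  have hj1T : j1 ≤ 2 * m := by
    have h := (Finset.mem_filter.mp hj1mem).1
    rw [← hj1def] at h
    simp [hT] at h; omega
  have hj1last : ∀ t, t ≤ 2 * m → j1 < t → F t ≠ μ + 1 := by
    intro t ht hlt hv
    have : t ∈ O1 := by simp [hO1, hT]; exact ⟨by omega, hv⟩
    have := Finset.le_max' _ _ this
    omega
  have hj01 : j0 < j1 := by
    have : j0 + 1 ≤ j1 := Finset.le_max' _ _ (by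
      simp only [hO1, Finset.mem_filter, hT, Finset.mem_range]
      exact ⟨by omega, hnext⟩)
    omega
  have hj1m : j1 < m := by
    by_contra hge
    push_neg at hge
    have h1 := hper (j1 - m)
    rw [show j1 - m + m = j1 by omega] at h1
    have h2 := hμ_le (j1 - m) (by omega)
    have h3 : F j1 = μ + 1 := hj1v
    linarith
  -- the filtered set is exactly {j0, j1}
  have hset : (Finset.range m).filter (domPred F m) = {j0, j1} := by
    ext j
    simp only [Finset.mem_filter, Finset.mem_range, Finset.mem_insert, domPred,
      Finset.mem_singleton, Finset.mem_Icc]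
    constructor
    · rintro ⟨hjm, hdom⟩
      have hjμ : μ ≤ F j := hμ_le j (by omega)
      rcases lt_trichotomy (F j) (μ + 1) with hv | hv | hv
      · -- F j = μ
        have hv0 : F j = μ := by omega
        left
        by_contra hne
        rcases Nat.lt_or_ge j j0 with hlt | hge
        · have := hdom (j0 - j) ⟨by omega, by omega⟩
          rw [show j + (j0 - j) = j0 by omega] at this
          omega
        · have hjj0 : j0 < j := by omega
          exact hj0last j (by omega) hjj0 hv0
      · -- F j = μ + 1
        right
        by_contra hne
        rcases Nat.lt_or_ge j j1 with hlt | hge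
        · have := hdom (j1 - j) ⟨by omega, by omega⟩
          rw [show j + (j1 - j) = j1 by omega] at this
          omega
        · have hjj1 : j1 < j := by omega
          exact hj1last j (by omega) hjj1 hv
      · -- F j ≥ μ + 2 : impossible
        exfalso
        rcases Nat.lt_or_ge j j0 with hlt | hge
        · have := hdom (j0 - j) ⟨by omega, by omega⟩
          rw [show j + (j0 - j) = j0 by omega] at this
          omega
        · have := hdom (j0 + m - j) ⟨by omega, by omega⟩
          rw [show j + (j0 + m - j) = j0 + m by omega, hper j0] at this
          omega
    · intro hj
      rcases hj with rfl | rfl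
      · refine ⟨hj0m, ?_⟩
        rintro r ⟨hr1, hr2⟩
        have h1 := hμ_le (j0 + r) (by omega)
        have h2 := hj0last (j0 + r) (by omega) (by omega)
        omega
      · refine ⟨hj1m, ?_⟩
        rintro r ⟨hr1, hr2⟩
        have h1 := hμ_le (j1 + r) (by omega)
        have h2 := hj1last (j1 + r) (by omega) (by omega)
        have h3 : F (j1 + r) ≠ μ := by
          intro hv
          exact hj0last (j1 + r) (by omega) (by omega) hv
        omega
  rw [hset]
  rw [Finset.card_insert_of_notMem (by simp; omega), Finset.card_singleton]

/-- Number of `true`s. -/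
def cnt {m : ℕ} (b : Fin m → Bool) : ℕ := (Finset.univ.filter (fun i => b i = true)).card

/-- Rotation of a sequence. -/
def rot {m : ℕ} (j : Fin m) (b : Fin m → Bool) : Fin m → Bool := fun i => b (i + j)

/-- Dominating sequence: all partial sums (`true ↦ -2`, `false ↦ 1`) positive. -/
def Dom {m : ℕ} (b : Fin m → Bool) : Prop := ∀ r ∈ Finset.Icc 1 m, 0 < csum (extendW b) r

instance {m : ℕ} : DecidablePred (Dom (m := m)) := fun _ => by
  unfold Dom; infer_instance

/-- Periodic extension of partial sums. -/
def Fb {m : ℕ} (b : Fin m → Bool) (t : ℕ) : ℤ := csum (fun i => extendW b (i % m)) t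

lemma extendW_lt {m : ℕ} (b : Fin m → Bool) {i : ℕ} (h : i < m) :
    extendW b i = b ⟨i, h⟩ := dif_pos h

lemma csum_eq_cnt {m : ℕ} (b : Fin m → Bool) :
    csum (extendW b) m = (m : ℤ) - 3 * (cnt b : ℤ) := by
  have h1 : csum (extendW b) m = ∑ i : Fin m, cval (b i) := by
    rw [csum, ← Fin.sum_univ_eq_sum_range (fun i => cval (extendW b i)) m]
    refine Finset.sum_congr rfl fun i _ => ?_
    rw [extendW_lt b i.isLt]
  rw [h1]
  have h2 : ∀ i : Fin m, cval (b i) = 1 - 3 * (if b i = true then (1 : ℤ) else 0) := by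
    intro i; cases h : b i <;> simp [cval]
  rw [Finset.sum_congr rfl fun i _ => h2 i]
  rw [Finset.sum_sub_distrib, Finset.sum_const, ← Finset.mul_sum, Finset.sum_boole]
  simp [cnt, Finset.card_univ]

lemma Fb_step {m : ℕ} (b : Fin m → Bool) (t : ℕ) :
    Fb b (t + 1) = Fb b t + cval (extendW b (t % m)) := csum_succ _ _

lemma Fb_le {m : ℕ} (b : Fin m → Bool) (t : ℕ) : Fb b (t + 1) ≤ Fb b t + 1 := by
  rw [Fb_step]
  have := cval_le_one (extendW b (t % m))
  omega

lemma Fb_window {m : ℕ} (hm : 0 < m) (b : Fin m → Bool) (h2 : csum (extendW b) m = 2)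
    (t : ℕ) : Fb b (t + m) = Fb b t + 2 := by
  induction t with
  | zero =>
      have : Fb b m = csum (extendW b) m := by
        unfold Fb csum
        refine Finset.sum_congr rfl fun i hi => ?_
        have := Nat.mod_eq_of_lt (Finset.mem_range.mp hi)
        simp [this]
      simpa [Fb, csum] using this.trans h2
  | succ k ih =>
      have e1 : k + 1 + m = (k + m) + 1 := by omega
      rw [e1, Fb_step, ih, Fb_step, Nat.add_mod_right]
      ring

lemma csum_rot {m : ℕ} (hm : 0 < m) (b : Fin m → Bool) (j : Fin m) :
    ∀ r, r ≤ m → csum (extendW (rot j b)) r = Fb b ((j : ℕ) + r) - Fb b (j : ℕ) := by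
  intro r
  induction r with
  | zero => intro _; simp [csum]
  | succ k ih =>
      intro hk
      rw [csum_succ, ih (by omega), show (j : ℕ) + (k + 1) = ((j : ℕ) + k) + 1 by omega,
        Fb_step]
      have e : extendW (rot j b) k = extendW b (((j : ℕ) + k) % m) := by
        rw [extendW_lt _ (show k < m by omega), extendW_lt _ (Nat.mod_lt _ hm)]
        show b (⟨k, by omega⟩ + j) = _
        congr 1
        ext
        simp [Fin.add_def, Nat.add_comm]
      rw [e]; ring

lemma dom_rot_iff {m : ℕ} (hm : 0 < m) (b : Fin m → Bool) (j : Fin m) :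
    Dom (rot j b) ↔ domPred (Fb b) m (j : ℕ) := by
  unfold Dom domPred
  constructor
  · intro h r hr
    have := h r hr
    rw [csum_rot hm b j r (Finset.mem_Icc.mp hr).2] at this
    omega
  · intro h r hr
    rw [csum_rot hm b j r (Finset.mem_Icc.mp hr).2]
    have := h r hr
    omega

lemma cnt_rot {m : ℕ} [NeZero m] (j : Fin m) (b : Fin m → Bool) :
    cnt (rot j b) = cnt b := by
  unfold cnt rot
  refine Finset.card_bij' (fun i _ => i + j) (fun i _ => i - j) ?_ ?_ ?_ ?_
  · intro i hi
    simpa using (Finset.mem_filter.mp hi).2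
  · intro i hi
    simp only [Finset.mem_filter, Finset.mem_univ, true_and]
    rw [sub_add_cancel]
    exact (Finset.mem_filter.mp hi).2
  · intro i _; exact add_sub_cancel_right i j
  · intro i _; exact sub_add_cancel i j

lemma rot_rot_sub {m : ℕ} [NeZero m] (j : Fin m) (b : Fin m → Bool) :
    rot j (fun i => b (i - j)) = b := by
  funext i
  show b (i + j - j) = b i
  rw [add_sub_cancel_right]

lemma rot_sub_rot {m : ℕ} [NeZero m] (j : Fin m) (b : Fin m → Bool) :
    (fun i => rot j b (i - j)) = b := by
  funext i
  show b (i - j + j) = b i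
  rw [sub_add_cancel]

/-- The double-counting / cycle-lemma count. -/
lemma count_formula (n : ℕ) (hn : 2 ≤ n) :
    (3 * n - 1) *
      (Finset.univ.filter
        (fun b : Fin (3 * n - 1) → Bool => cnt b = n - 1 ∧ Dom b)).card
    = 2 * Nat.choose (3 * n - 1) (n - 1) := by
  set m := 3 * n - 1 with hm
  haveI : NeZero m := ⟨by omega⟩
  have hm0 : 0 < m := by omega
  set Ω : Finset (Fin m → Bool) := Finset.univ.filter (fun b => cnt b = n - 1) with hΩ
  -- each element of Ω has exactly 2 dominating rotations
  have hA : ∀ b ∈ Ω, (Finset.univ.filter (fun j : Fin m => Dom (rot j b))).card = 2 := by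
    intro b hb
    have hcnt : cnt b = n - 1 := (Finset.mem_filter.mp hb).2
    have hsum : csum (extendW b) m = 2 := by
      rw [csum_eq_cnt, hcnt]
      have h1 : (1 : ℕ) ≤ n := by omega
      push_cast [hm, Nat.cast_sub (by omega : 1 ≤ 3 * n), Nat.cast_sub h1]
      ring
    have hcore := cycle_core m hm0 (Fb b) (Fb_le b) (Fb_window hm0 b hsum)
    rw [← hcore]
    refine Finset.card_bij (fun j _ => (j : ℕ)) ?_ ?_ ?_
    · intro j hj
      simp only [Finset.mem_filter, Finset.mem_range]
      refine ⟨j.isLt, ?_⟩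
      exact (dom_rot_iff hm0 b j).mp (Finset.mem_filter.mp hj).2
    · intro j _ j' _ h
      exact Fin.val_injective h
    · intro t ht
      obtain ⟨htm, hdom⟩ := Finset.mem_filter.mp ht
      rw [Finset.mem_range] at htm
      refine ⟨⟨t, htm⟩, ?_, rfl⟩
      simp only [Finset.mem_filter, Finset.mem_univ, true_and]
      exact (dom_rot_iff hm0 b ⟨t, htm⟩).mpr hdom
  -- rotation-invariance of the dominating count
  have hC : ∀ j : Fin m,
      (Ω.filter (fun b => Dom (rot j b))).card = (Ω.filter Dom).card := by
    intro j
    refine Finset.card_bij' (fun b _ => rot j b) (fun b _ => fun i => b (i - j)) ?_ ?_ ?_ ?_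
    · intro b hb
      obtain ⟨hbΩ, hdom⟩ := Finset.mem_filter.mp hb
      refine Finset.mem_filter.mpr ⟨?_, hdom⟩
      simp only [hΩ, Finset.mem_filter, Finset.mem_univ, true_and]
      rw [cnt_rot]; exact (Finset.mem_filter.mp hbΩ).2
    · intro b hb
      obtain ⟨hbΩ, hdom⟩ := Finset.mem_filter.mp hb
      refine Finset.mem_filter.mpr ⟨?_, ?_⟩
      · simp only [hΩ, Finset.mem_filter, Finset.mem_univ, true_and]
        have := cnt_rot j (fun i => b (i - j))
        rw [rot_rot_sub] at this
        rw [← this]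
        exact (Finset.mem_filter.mp hbΩ).2
      · rw [rot_rot_sub]; exact hdom
    · intro b _; exact rot_sub_rot j b
    · intro b _; exact rot_rot_sub j b
  -- double counting
  have hsum : ∑ b ∈ Ω, (Finset.univ.filter (fun j : Fin m => Dom (rot j b))).card
      = ∑ j : Fin m, (Ω.filter (fun b => Dom (rot j b))).card := by
    simp only [Finset.card_filter]
    exact Finset.sum_comm
  have hL : ∑ b ∈ Ω, (Finset.univ.filter (fun j : Fin m => Dom (rot j b))).card
      = 2 * Ω.card := by
    rw [Finset.sum_congr rfl hA, Finset.sum_const, smul_eq_mul, Nat.mul_comm]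
  have hR : ∑ j : Fin m, (Ω.filter (fun b => Dom (rot j b))).card
      = m * (Ω.filter Dom).card := by
    rw [Finset.sum_congr rfl (fun j _ => hC j), Finset.sum_const, smul_eq_mul,
      Finset.card_univ, Fintype.card_fin]
  -- card of Ω
  have hΩcard : Ω.card = Nat.choose m (n - 1) := by
    have hpc : ((Finset.univ : Finset (Fin m)).powersetCard (n - 1)).card
        = Nat.choose m (n - 1) := by
      simp [Finset.card_powersetCard]
    rw [← hpc]
    refine Finset.card_bij' (fun b _ => Finset.univ.filter (fun i => b i = true))
      (fun s _ => fun i => decide (i ∈ s)) ?_ ?_ ?_ ?_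
    · intro b hb
      rw [Finset.mem_powersetCard]
      exact ⟨Finset.filter_subset _ _ |>.trans (Finset.subset_univ _),
        (Finset.mem_filter.mp hb).2⟩
    · intro s hs
      rw [Finset.mem_powersetCard] at hs
      rw [hΩ, Finset.mem_filter]
      refine ⟨Finset.mem_univ _, ?_⟩
      show (Finset.univ.filter (fun i => decide (i ∈ s) = true)).card = n - 1
      rw [← hs.2]
      congr 1
      ext i
      simp
    · intro b _
      funext i
      by_cases h : b i = true <;> simp [h]
    · intro s _
      ext i
      simp
  have hfin : m * (Ω.filter Dom).card = 2 * Nat.choose m (n - 1) := by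
    rw [← hR, ← hsum, hL, hΩcard]
  have e : (Finset.univ.filter (fun b : Fin m → Bool => cnt b = n - 1 ∧ Dom b))
      = Ω.filter Dom := by
    rw [hΩ, Finset.filter_filter]
  rw [e]
  exact hfin

/-- Reversal (dropping the forced first step) of a branch sequence. -/
def revW {n : ℕ} (w : Fin (3 * n) → Bool) : Fin (3 * n - 1) → Bool :=
  fun j => w ⟨3 * n - 1 - (j : ℕ), by have := j.isLt; omega⟩

/-- Inverse of `revW`. -/
def mkW {n : ℕ} (b : Fin (3 * n - 1) → Bool) : Fin (3 * n) → Bool :=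
  fun i => if h : (i : ℕ) = 0 then true
    else b ⟨3 * n - 1 - (i : ℕ), by have := i.isLt; omega⟩

lemma sumrel {n : ℕ} (w : Fin (3 * n) → Bool) :
    ∀ r, r ≤ 3 * n - 1 →
      csum (extendW (revW w)) r
        = sval (extendW w) (3 * n - r) - sval (extendW w) (3 * n) := by
  intro r
  induction r with
  | zero => intro _; simp [csum]
  | succ k ih =>
      intro hk
      have e1 : 3 * n - k = (3 * n - (k + 1)) + 1 := by omega
      rw [csum_succ, ih (by omega), extendW_lt _ (show k < 3 * n - 1 by omega),
        cval_eq_neg_bval, e1, sval_succ]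
      have e2 : extendW w (3 * n - (k + 1)) = revW w ⟨k, by omega⟩ := by
        rw [extendW_lt _ (by omega : 3 * n - (k + 1) < 3 * n)]
        show w _ = w _
        congr 1
        ext
        simp
        omega
      rw [e2]
      ring
lemma revW_mkW {n : ℕ} (hn : 1 ≤ n) (b : Fin (3 * n - 1) → Bool) : revW (mkW b) = b := by
  funext j
  have hj := j.isLt
  show mkW b ⟨3 * n - 1 - (j : ℕ), _⟩ = b j
  rw [mkW, dif_neg (by simp; omega)]
  congr 1
  ext
  simp
  omega

lemma mkW_revW {n : ℕ} (hn : 1 ≤ n) (w : Fin (3 * n) → Bool)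
    (h0 : extendW w 0 = true) : mkW (revW w) = w := by
  funext i
  have hi := i.isLt
  by_cases h : (i : ℕ) = 0
  · rw [mkW, dif_pos h]
    rw [extendW_lt w (show 0 < 3 * n by omega)] at h0
    rw [← h0]
    congr 1
    ext
    simp [h]
  · rw [mkW, dif_neg h]
    show w _ = w i
    congr 1
    ext
    simp
    omega

lemma pathCond_w0 {n : ℕ} (hn : 2 ≤ n) (w : Fin (3 * n) → Bool)
    (hpos : ∀ i, 1 ≤ i → i ≤ 3 * n - 1 → 1 ≤ sval (extendW w) i) :
    extendW w 0 = true := by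
  have h1 := hpos 1 le_rfl (by omega)
  rw [show (1 : ℕ) = 0 + 1 from rfl, sval_succ] at h1
  simp only [sval, Finset.range_zero, Finset.sum_empty, zero_add] at h1
  cases h : extendW w 0
  · rw [h] at h1; simp [bval] at h1
  · rfl

lemma forward_cond {n : ℕ} (hn : 2 ≤ n) (w : Fin (3 * n) → Bool)
    (hpos : ∀ i, 1 ≤ i → i ≤ 3 * n - 1 → 1 ≤ sval (extendW w) i)
    (hzero : sval (extendW w) (3 * n) = 0) :
    cnt (revW w) = n - 1 ∧ Dom (revW w) := by
  have h0 := pathCond_w0 hn w hpos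
  have hcs : csum (extendW (revW w)) (3 * n - 1) = 2 := by
    rw [sumrel w (3 * n - 1) le_rfl, hzero,
      show 3 * n - (3 * n - 1) = 1 by omega,
      show (1 : ℕ) = 0 + 1 from rfl, sval_succ, h0]
    simp [sval, bval]
  constructor
  · have := csum_eq_cnt (revW w)
    rw [hcs] at this
    have hc : (cnt (revW w) : ℤ) = (n : ℤ) - 1 := by
      push_cast [show ((3 * n - 1 : ℕ) : ℤ) = 3 * (n : ℤ) - 1 by push_cast [Nat.cast_sub (show 1 ≤ 3 * n by omega)]; ring] at this
      linarith
    omega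
  · intro r hr
    rw [Finset.mem_Icc] at hr
    rw [sumrel w r hr.2, hzero]
    have := hpos (3 * n - r) (by omega) (by omega)
    omega

lemma backward_cond {n : ℕ} (hn : 2 ≤ n) (b : Fin (3 * n - 1) → Bool)
    (hcnt : cnt b = n - 1) (hdom : Dom b) :
    (∀ i, 1 ≤ i → i ≤ 3 * n - 1 → 1 ≤ sval (extendW (mkW b)) i) ∧
      sval (extendW (mkW b)) (3 * n) = 0 := by
  set w : Fin (3 * n) → Bool := mkW b with hw
  have hrev : revW w = b := revW_mkW (by omega) b
  have h0 : extendW w 0 = true := by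
    rw [extendW_lt w (show 0 < 3 * n by omega)]
    rw [hw, mkW]
    simp
  have hS1 : sval (extendW w) 1 = 2 := by
    rw [show (1 : ℕ) = 0 + 1 from rfl, sval_succ, h0]
    simp [sval, bval]
  have hcs : csum (extendW b) (3 * n - 1) = 2 := by
    rw [csum_eq_cnt, hcnt]
    push_cast [Nat.cast_sub (show 1 ≤ 3 * n by omega), Nat.cast_sub (show 1 ≤ n by omega)]
    ring
  have hzero : sval (extendW w) (3 * n) = 0 := by
    have := sumrel w (3 * n - 1) le_rfl
    rw [hrev, hcs, show 3 * n - (3 * n - 1) = 1 by omega, hS1] at this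
    omega
  refine ⟨?_, hzero⟩
  intro i h1 h2
  have := sumrel w (3 * n - i) (by omega)
  rw [hrev, hzero, show 3 * n - (3 * n - i) = i by omega] at this
  have hd := hdom (3 * n - i) (Finset.mem_Icc.mpr ⟨by omega, by omega⟩)
  omega

lemma sprim_eq_count (n : ℕ) (hn : 2 ≤ n) :
    Sprim n = (Finset.univ.filter
      (fun b : Fin (3 * n - 1) → Bool => cnt b = n - 1 ∧ Dom b)).card := by
  have e1 : Sprim n = Nat.card {b : Fin (3 * n - 1) → Bool // cnt b = n - 1 ∧ Dom b} := by
    rw [Sprim]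
    refine Nat.card_congr ?_
    refine Equiv.trans (Equiv.subtypeEquivRight (fun w => prim_iff_path hn w)) ?_
    exact {
      toFun := fun x => ⟨revW x.1, forward_cond hn x.1 x.2.1 x.2.2⟩
      invFun := fun y => ⟨mkW y.1, backward_cond hn y.1 y.2.1 y.2.2⟩
      left_inv := fun x => Subtype.ext
        (mkW_revW (by omega) x.1 (pathCond_w0 hn x.1 x.2.1))
      right_inv := fun y => Subtype.ext (revW_mkW (by omega) y.1) }
  rw [e1, Nat.card_eq_fintype_card, Fintype.card_subtype]

lemma sprim_one : Sprim 1 = 5 := by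
  have e : Sprim 1 = Nat.card {w : Fin (3 * 1) → Bool //
      endPair w = (1, 1) ∧ fibPairs (extendW w) 1 ≠ (1, 1) ∧
        fibPairs (extendW w) 2 ≠ (1, 1)} := by
    rw [Sprim]
    refine Nat.card_congr (Equiv.subtypeEquivRight fun w => ?_)
    constructor
    · rintro ⟨he, hp⟩
      exact ⟨he, hp 1 (by omega) (by omega), hp 2 (by omega) (by omega)⟩
    · rintro ⟨he, h1, h2⟩
      refine ⟨he, fun i hi1 hi2 => ?_⟩
      interval_cases i
      · exact h1
      · exact h2
  rw [e, Nat.card_eq_fintype_card]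
  decide

/-- `S(1) = 5` and for `n ≥ 2`, `S(n) = (2/(3n−1))·C(3n−1, n−1)`. -/
theorem Sprim_formula :
    Sprim 1 = 5 ∧
    ∀ n : ℕ, 2 ≤ n →
      (Sprim n : ℚ) = (2 / (3 * (n : ℚ) - 1)) * Nat.choose (3 * n - 1) (n - 1) := by
  refine ⟨sprim_one, fun n hn => ?_⟩
  have h3 : (3 * n - 1) * Sprim n = 2 * Nat.choose (3 * n - 1) (n - 1) := by
    rw [sprim_eq_count n hn]; exact count_formula n hn
  have hq : ((3 * n - 1 : ℕ) : ℚ) * (Sprim n : ℚ)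
      = 2 * (Nat.choose (3 * n - 1) (n - 1) : ℚ) := by
    exact_mod_cast congrArg (Nat.cast : ℕ → ℚ) h3
  have hc : ((3 * n - 1 : ℕ) : ℚ) = 3 * (n : ℚ) - 1 := by
    push_cast [Nat.cast_sub (show 1 ≤ 3 * n by omega)]; ring
  rw [hc] at hq
  have hn' : (2 : ℚ) ≤ (n : ℚ) := by exact_mod_cast hn
  have hne : 3 * (n : ℚ) - 1 ≠ 0 := by intro h; linarith
  field_simp
  linarith [hq]
end

section
/- For every integer n ≥ 1, B(n) = B(n−1) + Σ_{i=0}^{n−2} B(i)·S(n−i). -/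
lemma fibStep_fst (p : ℤ × ℤ) (b : Bool) : (fibStep p b).1 = p.2 := by
  cases b <;> simp [fibStep]

lemma fibPairs_succ_fst (w : ℕ → Bool) (j : ℕ) :
    (fibPairs w (j + 1)).1 = (fibPairs w j).2 := by
  simp [fibPairs, fibStep_fst]

lemma fibPairs_congr {w w' : ℕ → Bool} (j : ℕ) (h : ∀ t, t < j → w t = w' t) :
    fibPairs w j = fibPairs w' j := by
  induction j with
  | zero => rfl
  | succ j ih =>
    have h1 : fibPairs w j = fibPairs w' j := ih (fun t ht => h t (Nat.lt_succ_of_lt ht))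
    simp [fibPairs, h1, h j (Nat.lt_succ_self j)]

lemma fibPairs_add (w : ℕ → Bool) (k : ℕ) (h : fibPairs w k = (1, 1)) (j : ℕ) :
    fibPairs w (k + j) = fibPairs (fun t => w (k + t)) j := by
  induction j with
  | zero => simpa [fibPairs] using h
  | succ j ih =>
    rw [Nat.add_succ]
    simp [fibPairs, ih]

lemma fibPairs_nonneg (w : ℕ → Bool) (j : ℕ) :
    0 ≤ (fibPairs w j).1 ∧ 0 ≤ (fibPairs w j).2 := by
  induction j with
  | zero => simp [fibPairs]
  | succ j ih =>
    obtain ⟨h1, h2⟩ := ih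
    cases hb : w j <;> simp [fibPairs, fibStep, hb]
    · exact h2
    · exact ⟨h2, by positivity⟩

lemma fibPairs_dvd (w : ℕ → Bool) (a : ℤ) (k : ℕ)
    (h1 : a ∣ (fibPairs w k).1) (h2 : a ∣ (fibPairs w k).2) (j : ℕ) :
    a ∣ (fibPairs w (k + j)).1 ∧ a ∣ (fibPairs w (k + j)).2 := by
  induction j with
  | zero => exact ⟨h1, h2⟩
  | succ j ih =>
    obtain ⟨d1, d2⟩ := ih
    rw [Nat.add_succ]
    cases hb : w (k + j) <;> simp only [fibPairs, fibStep, hb,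
        Bool.false_eq_true, if_false, if_true]
    · exact ⟨d2, (dvd_abs _ _).mpr (dvd_sub d1 d2)⟩
    · exact ⟨d2, dvd_add d1 d2⟩

lemma fibPairs_parity (w : ℕ → Bool) (j : ℕ) :
    ((fibPairs w j).1 % 2, (fibPairs w j).2 % 2) =
      (if j % 3 = 0 then ((1 : ℤ), (1 : ℤ)) else if j % 3 = 1 then (1, 0) else (0, 1)) := by
  induction j with
  | zero => simp [fibPairs]
  | succ j ih =>
    have key : ∀ p : ℤ × ℤ, ∀ b : Bool,
        ((fibStep p b).1 % 2, (fibStep p b).2 % 2) = (p.2 % 2, (p.1 + p.2) % 2) := by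
      intro p b
      cases b <;> simp only [fibStep, if_true, if_false, Bool.false_eq_true]
      · rcases abs_cases (p.1 - p.2) with ⟨h, _⟩ | ⟨h, _⟩ <;> rw [h, Prod.mk.injEq] <;>
          exact ⟨rfl, by omega⟩
    have h2 := key (fibPairs w j) (w j)
    have hj : j % 3 = 0 ∨ j % 3 = 1 ∨ j % 3 = 2 := by omega
    have e1 : (fibPairs w j).1 % 2 = (if j % 3 = 0 then (1:ℤ) else if j % 3 = 1 then 1 else 0) := by
      rcases hj with h | h | h <;> simp [h] at ih ⊢ <;> exact ih.1
    have e2 : (fibPairs w j).2 % 2 = (if j % 3 = 0 then (1:ℤ) else if j % 3 = 1 then 0 else 1) := by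
      rcases hj with h | h | h <;> simp [h] at ih ⊢ <;> exact ih.2
    show ((fibStep (fibPairs w j) (w j)).1 % 2, (fibStep (fibPairs w j) (w j)).2 % 2) = _
    rw [h2]
    have hsum : ((fibPairs w j).1 + (fibPairs w j).2) % 2
        = ((fibPairs w j).1 % 2 + (fibPairs w j).2 % 2) % 2 := by omega
    rcases hj with h | h | h <;>
      · have h' : (j + 1) % 3 = (j % 3 + 1) % 3 := by omega
        rw [e2, hsum, e1, e2]
        simp [h, h', Prod.ext_iff]

lemma eq_one_one_mod3 {w : ℕ → Bool} {j : ℕ} (h : fibPairs w j = (1, 1)) : j % 3 = 0 := by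
  have := fibPairs_parity w j
  rw [h] at this
  by_contra hne
  have hj : j % 3 = 1 ∨ j % 3 = 2 := by omega
  rcases hj with h' | h' <;> simp [h', Prod.ext_iff] at this

/-- In a primitive walk of length `3k` with `k ≥ 2` ending at `(1,1)`,
all values are nonzero. -/
lemma primitive_nonzero (w : ℕ → Bool) (k : ℕ) (hk : 2 ≤ k)
    (hend : fibPairs w (3 * k) = (1, 1))
    (hprim : ∀ i, 1 ≤ i → i ≤ 3 * k - 1 → fibPairs w i ≠ (1, 1)) :
    ∀ i, i ≤ 3 * k + 1 → (fibPairs w i).1 ≠ 0 := by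
  intro j hj hzero
  -- basic facts
  have hend1 : (fibPairs w (3 * k)).1 = 1 := by rw [hend]
  have hend2 : (fibPairs w (3 * k)).2 = 1 := by rw [hend]
  -- j ≥ 2
  have hj2 : 2 ≤ j := by
    rcases j with _ | _ | j
    · simp [fibPairs] at hzero
    · rw [show (1:ℕ) = 0 + 1 from rfl, fibPairs_succ_fst] at hzero
      simp [fibPairs] at hzero
    · omega
  -- j ≤ 3k - 1
  have hjle : j ≤ 3 * k - 1 := by
    rcases Nat.lt_or_ge j (3 * k) with h | h
    · omega
    · exfalso
      rcases (by omega : j = 3 * k ∨ j = 3 * k + 1) with rfl | rfl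
      · rw [hend1] at hzero; exact one_ne_zero hzero
      · rw [fibPairs_succ_fst, hend2] at hzero; exact one_ne_zero hzero
  set a := (fibPairs w (j - 1)).1 with ha
  have hpair : fibPairs w (j - 1) = (a, 0) := by
    have : (fibPairs w (j - 1)).2 = 0 := by
      have := fibPairs_succ_fst w (j - 1)
      rw [show j - 1 + 1 = j by omega] at this
      rw [← this]; exact hzero
    rw [ha]; exact Prod.ext rfl this
  -- a divides everything later, in particular 1
  have hdvd : a ∣ (fibPairs w (3 * k)).1 := by
    have := fibPairs_dvd w a (j - 1) (by rw [hpair]) (by rw [hpair]; exact dvd_zero a)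
      (3 * k - (j - 1))
    rw [show j - 1 + (3 * k - (j - 1)) = 3 * k by omega] at this
    exact this.1
  rw [hend1] at hdvd
  have hanneg : 0 ≤ a := (fibPairs_nonneg w (j - 1)).1
  have ha1 : a = 1 := by
    rcases Int.isUnit_iff.mp (isUnit_of_dvd_one hdvd) with h | h
    · exact h
    · omega
  -- pair at j is (0,1), pair at j+1 is (1,1)
  have hpj : fibPairs w j = (0, 1) := by
    have : fibPairs w j = fibStep (fibPairs w (j - 1)) (w (j - 1)) := by
      rw [show j = (j - 1) + 1 by omega]; rfl
    rw [this, hpair, ha1]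
    cases w (j - 1) <;> simp [fibStep]
  have hpj1 : fibPairs w (j + 1) = (1, 1) := by
    show fibStep (fibPairs w j) (w j) = (1, 1)
    rw [hpj]
    cases w j <;> simp [fibStep]
  -- so j + 1 ≥ 3k, i.e. j = 3k - 1
  have hj3k : j = 3 * k - 1 := by
    by_contra hne
    exact hprim (j + 1) (by omega) (by omega) hpj1
  -- pair at 3k - 2 is (1, 0); pair at 3k - 3 gives a contradiction
  have hpair' : fibPairs w (3 * k - 2) = (1, 0) := by
    rw [show 3 * k - 2 = j - 1 by omega] at *
    rw [hpair, ha1]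
  have hstep : fibPairs w (3 * k - 2) = fibStep (fibPairs w (3 * k - 3)) (w (3 * k - 3)) := by
    rw [show 3 * k - 2 = (3 * k - 3) + 1 by omega]; rfl
  set c := (fibPairs w (3 * k - 3)).1 with hc
  have hcnneg : 0 ≤ c := (fibPairs_nonneg w (3 * k - 3)).1
  have hsnd : (fibPairs w (3 * k - 3)).2 = 1 := by
    have h1 := fibPairs_succ_fst w (3 * k - 3)
    rw [show 3 * k - 3 + 1 = 3 * k - 2 by omega, hpair'] at h1
    exact h1.symm
  have hp : fibPairs w (3 * k - 3) = (c, 1) := Prod.ext rfl hsnd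
  rw [hp, hpair'] at hstep
  have hc1 : c = 1 := by
    cases hb : w (3 * k - 3) <;> rw [hb] at hstep <;>
      simp only [fibStep, if_true, if_false, Bool.false_eq_true, Prod.mk.injEq] at hstep
    · have : |c - 1| = 0 := hstep.2.symm
      rw [abs_eq_zero] at this; omega
    · omega
  exact hprim (3 * k - 3) (by omega) (by omega) (by rw [hp, hc1])

/-! ### Splitting and concatenating branch sequences -/

def wpre {L1 L2 M : ℕ} (hM : L1 + L2 = M) (w : Fin M → Bool) : Fin L1 → Bool :=
  fun k => w ⟨k, by omega⟩

def wsuf {L1 L2 M : ℕ} (hM : L1 + L2 = M) (w : Fin M → Bool) : Fin L2 → Bool :=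
  fun k => w ⟨L1 + k, by omega⟩

def wcat {L1 L2 M : ℕ} (hM : L1 + L2 = M) (u : Fin L1 → Bool) (v : Fin L2 → Bool) :
    Fin M → Bool :=
  fun k => if h : (k : ℕ) < L1 then u ⟨k, h⟩ else v ⟨(k : ℕ) - L1, by omega⟩

lemma pre_agree {L1 L2 M : ℕ} (hM : L1 + L2 = M) (w : Fin M → Bool) {j : ℕ} (hj : j ≤ L1) :
    fibPairs (extendW (wpre hM w)) j = fibPairs (extendW w) j := by
  refine fibPairs_congr j (fun t ht => ?_)
  have h1 : t < L1 := lt_of_lt_of_le ht hj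
  simp only [extendW, wpre, dif_pos h1, dif_pos (show t < M by omega)]

lemma suf_agree {L1 L2 M : ℕ} (hM : L1 + L2 = M) (w : Fin M → Bool)
    (h11 : fibPairs (extendW w) L1 = (1, 1)) {j : ℕ} (hj : j ≤ L2) :
    fibPairs (extendW (wsuf hM w)) j = fibPairs (extendW w) (L1 + j) := by
  rw [fibPairs_add (extendW w) L1 h11 j]
  refine fibPairs_congr j (fun t ht => ?_)
  have h1 : t < L2 := lt_of_lt_of_le ht hj
  simp only [extendW, wsuf, dif_pos h1, dif_pos (show L1 + t < M by omega)]

lemma cat_pre {L1 L2 M : ℕ} (hM : L1 + L2 = M) (u : Fin L1 → Bool) (v : Fin L2 → Bool)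
    {j : ℕ} (hj : j ≤ L1) :
    fibPairs (extendW (wcat hM u v)) j = fibPairs (extendW u) j := by
  refine fibPairs_congr j (fun t ht => ?_)
  have h1 : t < L1 := lt_of_lt_of_le ht hj
  simp only [extendW, wcat, dif_pos h1, dif_pos (show t < M by omega)]

lemma cat_suf {L1 L2 M : ℕ} (hM : L1 + L2 = M) (u : Fin L1 → Bool) (v : Fin L2 → Bool)
    (h11 : fibPairs (extendW u) L1 = (1, 1)) {j : ℕ} (hj : j ≤ L2) :
    fibPairs (extendW (wcat hM u v)) (L1 + j) = fibPairs (extendW v) j := by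
  have h11' : fibPairs (extendW (wcat hM u v)) L1 = (1, 1) := by
    rw [cat_pre hM u v le_rfl]; exact h11
  rw [fibPairs_add _ L1 h11' j]
  refine (fibPairs_congr j (fun t ht => ?_)).symm
  have h1 : t < L2 := lt_of_lt_of_le ht hj
  simp only [extendW, wcat, dif_pos h1, dif_pos (show L1 + t < M by omega),
    dif_neg (show ¬ L1 + t < L1 by omega)]
  congr 1
  exact Fin.ext (by simp)

lemma cat_pre_suf {L1 L2 M : ℕ} (hM : L1 + L2 = M) (w : Fin M → Bool) :
    wcat hM (wpre hM w) (wsuf hM w) = w := by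
  funext k
  simp only [wcat, wpre, wsuf]
  split
  · congr 1
  · next h => exact congrArg w (Fin.ext (by simp; omega))

lemma pre_cat {L1 L2 M : ℕ} (hM : L1 + L2 = M) (u : Fin L1 → Bool) (v : Fin L2 → Bool) :
    wpre hM (wcat hM u v) = u := by
  funext k
  simp only [wpre, wcat, dif_pos k.isLt]

lemma suf_cat {L1 L2 M : ℕ} (hM : L1 + L2 = M) (u : Fin L1 → Bool) (v : Fin L2 → Bool) :
    wsuf hM (wcat hM u v) = v := by
  funext k
  simp only [wsuf, wcat, dif_neg (show ¬ L1 + (k : ℕ) < L1 by omega)]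
  exact congrArg v (Fin.ext (by simp))

/-! ### The predicates -/

def Bpred (n : ℕ) (w : Fin (3 * n) → Bool) : Prop :=
  endPair w = (1, 1) ∧ ∀ i, i ≤ 3 * n + 1 → (fibPairs (extendW w) i).1 ≠ 0

def Zpred (k : ℕ) (w : Fin (3 * k) → Bool) : Prop :=
  endPair w = (1, 1) ∧ ∀ i, i < 3 * k →
    (1 ≤ i → fibPairs (extendW w) i ≠ (1, 1)) ∧ (fibPairs (extendW w) i).1 ≠ 0

def Cpred (n i : ℕ) (w : Fin (3 * n) → Bool) : Prop :=
  Bpred n w ∧ fibPairs (extendW w) (3 * i) = (1, 1) ∧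
    ∀ j, 3 * i < j → j < 3 * n → fibPairs (extendW w) j ≠ (1, 1)

noncomputable def Znum (k : ℕ) : ℕ := Nat.card {w : Fin (3 * k) → Bool // Zpred k w}

lemma Bnz_eq (n : ℕ) : Bnz n = Nat.card {w : Fin (3 * n) → Bool // Bpred n w} := rfl

lemma endPair_eq {m : ℕ} (w : Fin m → Bool) : endPair w = fibPairs (extendW w) m := rfl

lemma Znum_eq_Sprim (k : ℕ) (hk : 2 ≤ k) : Znum k = Sprim k := by
  refine Nat.card_congr (Equiv.subtypeEquivRight (fun w => ⟨fun h => ?_, fun h => ?_⟩))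
  · exact ⟨h.1, fun i h1 h2 => (h.2 i (by omega)).1 h1⟩
  · refine ⟨h.1, fun i hi => ?_⟩
    have hnz := primitive_nonzero (extendW w) k hk h.1 h.2
    exact ⟨fun h1 => h.2 i h1 (by omega), hnz i (by omega)⟩

instance ZpredDec (k : ℕ) : DecidablePred (Zpred k) := fun w => by
  unfold Zpred; exact inferInstance

lemma Znum_one : Znum 1 = 1 := by
  rw [Znum, Nat.card_eq_fintype_card]
  decide

/-! ### The last return index -/

section LastIdx

variable (n : ℕ)

/-- the greatest index `j ≤ 3n - 1` where the pair is `(1,1)`, divided by 3 -/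
noncomputable def lastIdx (w : Fin (3 * n) → Bool) : ℕ :=
  Nat.findGreatest (fun j => fibPairs (extendW w) j = (1, 1)) (3 * n - 1) / 3

variable (hn : 1 ≤ n) (w : Fin (3 * n) → Bool)

lemma lastIdx_mul3 :
    3 * lastIdx n w = Nat.findGreatest (fun j => fibPairs (extendW w) j = (1, 1)) (3 * n - 1) := by
  have hP : fibPairs (extendW w)
      (Nat.findGreatest (fun j => fibPairs (extendW w) j = (1, 1)) (3 * n - 1)) = (1, 1) :=
    Nat.findGreatest_spec (P := fun j => fibPairs (extendW w) j = (1, 1)) (Nat.zero_le _) rfl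
  have h3 := eq_one_one_mod3 hP
  unfold lastIdx
  omega

include hn in
lemma lastIdx_lt : lastIdx n w < n := by
  have h := Nat.findGreatest_le (P := fun j => fibPairs (extendW w) j = (1, 1)) (3 * n - 1)
  unfold lastIdx
  omega

lemma lastIdx_spec : fibPairs (extendW w) (3 * lastIdx n w) = (1, 1) := by
  rw [lastIdx_mul3]
  exact Nat.findGreatest_spec (P := fun j => fibPairs (extendW w) j = (1, 1)) (Nat.zero_le _) rfl

include hn in
lemma lastIdx_greatest {j : ℕ} (h1 : 3 * lastIdx n w < j) (h2 : j < 3 * n) :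
    fibPairs (extendW w) j ≠ (1, 1) := by
  rw [lastIdx_mul3] at h1
  exact Nat.findGreatest_is_greatest h1 (by omega)

include hn in
lemma lastIdx_eq_iff {i : ℕ} (hi : i < n) :
    lastIdx n w = i ↔ (fibPairs (extendW w) (3 * i) = (1, 1) ∧
      ∀ j, 3 * i < j → j < 3 * n → fibPairs (extendW w) j ≠ (1, 1)) := by
  constructor
  · rintro rfl
    exact ⟨lastIdx_spec n w, fun j h1 h2 => lastIdx_greatest n hn w h1 h2⟩
  · rintro ⟨hsp, hgr⟩
    have hle : 3 * i ≤ 3 * lastIdx n w := by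
      have := Nat.le_findGreatest (m := 3 * i) (n := 3 * n - 1)
        (P := fun j => fibPairs (extendW w) j = (1, 1)) (by omega) hsp
      rw [← lastIdx_mul3] at this
      exact this
    have hlt := lastIdx_lt n hn w
    rcases Nat.lt_or_ge (3 * i) (3 * lastIdx n w) with h | h
    · exact absurd (lastIdx_spec n w) (hgr _ h (by omega))
    · omega

end LastIdx

/-! ### Splitting a walk at the last return -/

lemma Cpred_equiv (n i : ℕ) (hi : i < n) :
    Nat.card {w : Fin (3 * n) → Bool // Cpred n i w} = Bnz i * Znum (n - i) := by
  have hM : 3 * i + 3 * (n - i) = 3 * n := by omega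
  rw [Bnz_eq, Znum, ← Nat.card_prod]
  refine Nat.card_congr ?_
  refine
    { toFun := fun x => ⟨⟨wpre hM x.1, ?_⟩, ⟨wsuf hM x.1, ?_⟩⟩
      invFun := fun y => ⟨wcat hM y.1.1 y.2.1, ?_⟩
      left_inv := fun x => Subtype.ext (cat_pre_suf hM x.1)
      right_inv := fun y => Prod.ext (Subtype.ext (pre_cat hM _ _)) (Subtype.ext (suf_cat hM _ _)) }
  · -- Bpred i (wpre hM w)
    obtain ⟨w, ⟨hB1, hB2⟩, hsp, hgr⟩ := x
    constructor
    · rw [endPair_eq, pre_agree hM w le_rfl]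
      exact hsp
    · intro j hj
      rcases Nat.lt_or_ge j (3 * i + 1) with h | h
      · rw [pre_agree hM w (by omega)]
        exact hB2 j (by omega)
      · have hj' : j = 3 * i + 1 := by omega
        subst hj'
        rw [fibPairs_succ_fst, pre_agree hM w le_rfl, hsp]
        exact one_ne_zero
  · -- Zpred (n - i) (wsuf hM w)
    obtain ⟨w, ⟨hB1, hB2⟩, hsp, hgr⟩ := x
    constructor
    · rw [endPair_eq, suf_agree hM w hsp le_rfl, show 3 * i + 3 * (n - i) = 3 * n by omega]
      exact hB1
    · intro j hj
      rw [suf_agree hM w hsp (le_of_lt hj)]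
      exact ⟨fun h1 => hgr (3 * i + j) (by omega) (by omega), hB2 (3 * i + j) (by omega)⟩
  · -- Cpred n i (wcat hM u v)
    obtain ⟨⟨u, hu1, hu2⟩, ⟨v, hv1, hv2⟩⟩ := y
    have hsp : fibPairs (extendW (wcat hM u v)) (3 * i) = (1, 1) := by
      rw [cat_pre hM u v le_rfl]
      exact hu1
    have hcs : ∀ j, j ≤ 3 * (n - i) →
        fibPairs (extendW (wcat hM u v)) (3 * i + j) = fibPairs (extendW v) j :=
      fun j hj => cat_suf hM u v hu1 hj
    have hend : fibPairs (extendW (wcat hM u v)) (3 * n) = (1, 1) := by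
      have h := hcs _ le_rfl
      rw [hM] at h
      rw [h]
      exact hv1
    refine ⟨⟨hend, ?_⟩, hsp, ?_⟩
    · intro j hj
      rcases Nat.lt_or_ge j (3 * i + 1) with h | h
      · rw [cat_pre hM u v (by omega)]
        exact hu2 j (by omega)
      · rcases Nat.lt_or_ge j (3 * n) with h' | h'
        · rw [show j = 3 * i + (j - 3 * i) by omega, hcs _ (by omega)]
          exact (hv2 (j - 3 * i) (by omega)).2
        · rcases (by omega : j = 3 * n ∨ j = 3 * n + 1) with rfl | rfl
          · rw [hend]; exact one_ne_zero
          · rw [fibPairs_succ_fst, hend]; exact one_ne_zero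
    · intro j h1 h2
      rw [show j = 3 * i + (j - 3 * i) by omega, hcs _ (by omega)]
      exact (hv2 (j - 3 * i) (by omega)).1 (by omega)

lemma nat_card_sigma {n : ℕ} (F : Fin n → Type*) [∀ i, Finite (F i)] :
    Nat.card (Σ i, F i) = ∑ i : Fin n, Nat.card (F i) := by
  letI : ∀ i, Fintype (F i) := fun i => Fintype.ofFinite _
  simp [Nat.card_eq_fintype_card]

lemma Bnz_sum (n : ℕ) (hn : 1 ≤ n) :
    Bnz n = ∑ i ∈ Finset.range n, Nat.card {w : Fin (3 * n) → Bool // Cpred n i w} := by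
  rw [Bnz_eq]
  set f : {w : Fin (3 * n) → Bool // Bpred n w} → Fin n :=
    fun x => ⟨lastIdx n x.1, lastIdx_lt n hn x.1⟩ with hf
  rw [Nat.card_congr (Equiv.sigmaFiberEquiv f).symm, nat_card_sigma]
  rw [← Fin.sum_univ_eq_sum_range (fun j => Nat.card {w : Fin (3 * n) → Bool // Cpred n j w}) n]
  refine Finset.sum_congr rfl (fun i _ => Nat.card_congr ?_)
  refine
    { toFun := fun x => ⟨x.1.1, x.1.2, ?_⟩
      invFun := fun y => ⟨⟨y.1, y.2.1⟩, ?_⟩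
      left_inv := fun x => Subtype.ext (Subtype.ext rfl)
      right_inv := fun y => Subtype.ext rfl }
  · have hval : lastIdx n x.1.1 = (i : ℕ) := congrArg Fin.val x.2
    exact (lastIdx_eq_iff n hn x.1.1 i.isLt).mp hval
  · exact Fin.ext ((lastIdx_eq_iff n hn y.1 i.isLt).mpr ⟨y.2.2.1, y.2.2.2⟩)

/-- For every `n ≥ 1`, `B(n) = B(n−1) + Σ_{i=0}^{n−2} B(i)·S(n−i)`. -/
theorem Bnz_recurrence (n : ℕ) (hn : 1 ≤ n) :
    Bnz n = Bnz (n - 1) + ∑ i ∈ Finset.range (n - 1), Bnz i * Sprim (n - i) := by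
  rw [Bnz_sum n hn]
  have h1 : ∀ i ∈ Finset.range n,
      Nat.card {w : Fin (3 * n) → Bool // Cpred n i w} = Bnz i * Znum (n - i) := by
    intro i hi
    exact Cpred_equiv n i (Finset.mem_range.mp hi)
  rw [Finset.sum_congr rfl h1]
  have h2 := Finset.sum_range_succ (fun i => Bnz i * Znum (n - i)) (n - 1)
  rw [show n - 1 + 1 = n by omega] at h2
  rw [h2, show n - (n - 1) = 1 by omega, Znum_one, mul_one]
  rw [Finset.sum_congr rfl (fun i hi => by
    rw [Znum_eq_Sprim (n - i) (by have := Finset.mem_range.mp hi; omega)])]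
  exact Nat.add_comm _ _
end
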